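/- Let g = [[a,b],[c,d]] ∈ SL(2,ℂ) with associated Möbius transformation z ↦ (az+b)/(cz+d), and let w_i, w_j be the Möbius images of distinct points z_i, z_j (all finite and with w_i ≠ w_j). Then M(w_i, w_j) = g · M(z_i, z_j) · g⁻¹, where M(a,b) = (1/(b−a))·[[ (a+b)/2, −a b ],[ 1, −(a+b)/2 ]]. -/

import Mathlib

open Matrix

/-- The matrix `M(a,b) = (1/(b−a))·[[ (a+b)/2, −a b ],[ 1, −(a+b)/2 ]]`. -/
noncomputable def M (a b : ℂ) : Matrix (Fin 2) (Fin 2) ℂ :=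
  (b - a)⁻¹ • !![(a + b) / 2, -(a * b); 1, -(a + b) / 2]

set_option maxHeartbeats 2000000 in
theorem M_conjugation (a b c d zi zj wi wj : ℂ)
    (hdet : a * d - b * c = 1)
    (hij : zi ≠ zj)
    (hdi : c * zi + d ≠ 0) (hdj : c * zj + d ≠ 0)
    (hwi : wi = (a * zi + b) / (c * zi + d))
    (hwj : wj = (a * zj + b) / (c * zj + d))
    (hw : wi ≠ wj) :
    M wi wj = !![a, b; c, d] * M zi zj * (!![a, b; c, d])⁻¹ := by
  have hinv : (!![a, b; c, d])⁻¹ = !![d, -b; -c, a] := by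
    apply inv_eq_right_inv
    ext i j
    fin_cases i <;> fin_cases j <;>
      simp [Matrix.mul_apply, Fin.sum_univ_two] <;>
      first | ring1 | linear_combination hdet
  have hij' : zj - zi ≠ 0 := sub_ne_zero.mpr (Ne.symm hij)
  subst hwi hwj
  have hwd : (a * zj + b) / (c * zj + d) - (a * zi + b) / (c * zi + d)
      = (zj - zi) / ((c * zi + d) * (c * zj + d)) := by
    rw [div_sub_div _ _ hdj hdi, mul_comm (c * zj + d) (c * zi + d)]
    congr 1
    linear_combination (zj - zi) * hdet
  have hden : (c * zi + d) * (c * zj + d) ≠ 0 := mul_ne_zero hdi hdj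
  rw [hinv]
  ext i j
  fin_cases i <;> fin_cases j <;>
  · simp only [M, hwd, Matrix.smul_apply, Matrix.mul_apply, Fin.sum_univ_two,
      Matrix.cons_val', Matrix.cons_val_zero, Matrix.cons_val_one, Matrix.head_cons,
      Matrix.head_fin_const, Matrix.empty_val', Matrix.cons_val_fin_one,
      smul_eq_mul, inv_div, Fin.zero_eta, Fin.mk_one, Matrix.of_apply]
    field_simp
    ring_nf
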